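/- arXiv:1710.11015 — 5 statements merged into one kernel-verified Lean document; each statement's English description precedes it below -/
import Mathlib

section
/- Let p and t be real numbers with 0 < p < 1, t > 0, and p(1+t) < 1. Then the relative entropy satisfies RE(p + pt ‖ p) > p·t²·(1−t)/2; that is, p(1+t)·log(1+t) + (1 − p − pt)·log((1 − p − pt)/(1 − p)) > p·t²·(1−t)/2. -/
/-! Bound the two terms separately: `log (1 + t) > t - t²/2` for the first, and
`a log (a/b) ≥ a - b` for the second. The resulting lower bound
`p(1+t)(t - t²/2) - pt` equals `p t² (1 - t)/2` exactly. -/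

namespace Real

lemma sub_sq_div_two_lt_log_one_add {t : ℝ} (ht : 0 < t) : t - t ^ 2 / 2 < log (1 + t) := by
  refine lt_of_le_of_lt ?_ (lt_log_one_add_of_pos ht)
  rw [le_div_iff₀ (by positivity)]
  nlinarith [pow_pos ht 3]

lemma sub_le_mul_log_div {a b : ℝ} (ha : 0 < a) (hb : 0 < b) : a - b ≤ a * log (a / b) := by
  calc a - b = a * (1 - (a / b)⁻¹) := by field_simp
    _ ≤ a * log (a / b) := by gcongr; exact one_sub_inv_le_log_of_pos (by positivity)

end Real

theorem stmt8_general (p t : ℝ) (hp : 0 < p) (ht : 0 < t) (hpt : p * (1 + t) < 1) :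
    p * (1 + t) * Real.log (1 + t) +
      (1 - p - p * t) * Real.log ((1 - p - p * t) / (1 - p)) >
    p * t ^ 2 * (1 - t) / 2 := by
  have hq : 0 < 1 - p - p * t := by linarith
  have hr : 0 < 1 - p := by nlinarith
  calc p * t ^ 2 * (1 - t) / 2
      = p * (1 + t) * (t - t ^ 2 / 2) + ((1 - p - p * t) - (1 - p)) := by ring
    _ < p * (1 + t) * Real.log (1 + t) +
          (1 - p - p * t) * Real.log ((1 - p - p * t) / (1 - p)) :=
      add_lt_add_of_lt_of_le
        (mul_lt_mul_of_pos_left (Real.sub_sq_div_two_lt_log_one_add ht) (by positivity))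
        (Real.sub_le_mul_log_div hq hr)

/-- for `0 < p < 1`, `t > 0` with `p(1+t) < 1`, the relative entropy
satisfies `RE(p + pt ‖ p) > p·t²·(1−t)/2`. -/
theorem stmt8 (p t : ℝ) (hp : 0 < p) (hp1 : p < 1) (ht : 0 < t) (hpt : p * (1 + t) < 1) :
    p * (1 + t) * Real.log (1 + t) +
      (1 - p - p * t) * Real.log ((1 - p - p * t) / (1 - p)) >
    p * t ^ 2 * (1 - t) / 2 :=
  stmt8_general p t hp ht hpt
end

section
/- Let p₀ ∈ (0,1) and let p = p(n) satisfy 0 < p(n) ≤ p₀ and np(n)/log n → ∞. Let H̃₀ = [[(1/√α)A, −I],[I, 0]] and E = [[0, I + (1/α)(I − D)],[0, 0]] be 2n×2n block matrices. Then both (1/(2n))·‖H̃₀‖_F² and (1/(2n))·‖H̃₀ + E‖_F² are almost surely bounded: almost surely, limsup_{n→∞} (1/(2n))‖H̃₀‖_F² < ∞ and limsup_{n→∞} (1/(2n))‖H̃₀ + E‖_F² < ∞. -/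
open MeasureTheory Filter Matrix
open scoped ENNReal Topology

noncomputable section

/-- Bernoulli measure on `Bool` with parameter `p` (clamped into `[0,1]`). -/
def bern (p : ℝ) : Measure Bool :=
  (PMF.bernoulli (min (Real.toNNReal p) 1) (min_le_right _ _)).toMeasure

instance (p : ℝ) : IsProbabilityMeasure (bern p) := by unfold bern; infer_instance

/-- The product Bernoulli measure governing the edge indicators of `G(n,p)`. -/
def edgeMeasure (n : ℕ) (p : ℝ) : Measure (Fin n × Fin n → Bool) :=
  Measure.pi fun _ => bern p

/-- The adjacency matrix of the random graph built from the edge indicators `ω`. -/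
def adjMatrix (n : ℕ) (ω : Fin n × Fin n → Bool) : Matrix (Fin n) (Fin n) ℝ :=
  fun i j =>
    if i < j then (if ω (i, j) then 1 else 0)
    else if j < i then (if ω (j, i) then 1 else 0) else 0

/-- Degree of vertex `i`. -/
def deg (n : ℕ) (ω : Fin n × Fin n → Bool) (i : Fin n) : ℝ := ∑ j, adjMatrix n ω i j

/-- The ℓ²→ℓ² operator norm of a matrix. -/
def opNorm {m : Type*} [Fintype m] [DecidableEq m] {K : Type*} [RCLike K]
    (M : Matrix m m K) : ℝ :=
  ‖(Matrix.toEuclideanLin M).toContinuousLinearMap‖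

/-- Frobenius norm of a matrix. -/
def frobNorm {m : Type*} [Fintype m] {K : Type*} [RCLike K] (M : Matrix m m K) : ℝ :=
  Real.sqrt (∑ i, ∑ j, ‖M i j‖ ^ 2)

/-- `∫ f dμ_M` where `μ_M` is the empirical spectral measure of `M`. -/
def esdInt {m : Type*} [Fintype m] [DecidableEq m] (M : Matrix m m ℂ) (f : ℂ → ℝ) : ℝ :=
  ((M.charpoly.roots).map f).sum / (Fintype.card m)

/-- The non-backtracking spectrum operator `H = [[A, I − D],[I, 0]]` as a complex matrix. -/
def Hmat (n : ℕ) (ω : Fin n × Fin n → Bool) :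
    Matrix (Fin n ⊕ Fin n) (Fin n ⊕ Fin n) ℂ :=
  Matrix.fromBlocks ((adjMatrix n ω).map (fun x => (x : ℂ)))
    (1 - Matrix.diagonal fun i => (deg n ω i : ℂ)) 1 0

/-- The partly averaged matrix `H₀ = [[A, −αI],[I, 0]]` with `α = (n−1)p − 1`. -/
def H0mat (n : ℕ) (p : ℝ) (ω : Fin n × Fin n → Bool) :
    Matrix (Fin n ⊕ Fin n) (Fin n ⊕ Fin n) ℂ :=
  Matrix.fromBlocks ((adjMatrix n ω).map (fun x => (x : ℂ)))
    (-((((n : ℝ) - 1) * p - 1 : ℝ) : ℂ) • 1) 1 0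

/-- The rescaled partly averaged matrix `H̃₀ = [[(1/√α)A, −I],[I, 0]]` (real entries). -/
def Ht0mat (n : ℕ) (p : ℝ) (ω : Fin n × Fin n → Bool) :
    Matrix (Fin n ⊕ Fin n) (Fin n ⊕ Fin n) ℝ :=
  Matrix.fromBlocks (((Real.sqrt (((n : ℝ) - 1) * p - 1))⁻¹ : ℝ) • adjMatrix n ω)
    (-1) 1 0

/-- The perturbation matrix `E = [[0, I + (1/α)(I − D)],[0, 0]]` (real entries). -/
def Emat (n : ℕ) (p : ℝ) (ω : Fin n × Fin n → Bool) :
    Matrix (Fin n ⊕ Fin n) (Fin n ⊕ Fin n) ℝ :=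
  Matrix.fromBlocks 0
    (1 + ((((n : ℝ) - 1) * p - 1)⁻¹ : ℝ) • (1 - Matrix.diagonal (deg n ω))) 0 0

/-!
The degree of a vertex is a sum of at most `n` independent Bernoulli(`p`) variables, so the
Chernoff bound at `t = 1` gives `ℙ(deg i ≥ 3np) ≤ e^{-np}`, and a union bound over the vertices
gives `ℙ(max degree ≥ 3np) ≤ n e^{-np} ≤ n⁻²` as soon as `np ≥ 3 log n`. By Borel–Cantelli, almost
surely every degree is eventually below `3np ≤ 4α`. Both squared Frobenius norms are explicit in
the degrees, `‖H̃₀‖² = Σ dᵢ / α + 2n` and `‖H̃₀ + E‖² = Σ dᵢ / α + Σ ((1 - dᵢ) / α)² + n`, hence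
`O(n)` on that event.
-/

section Frobenius

variable {m : Type*} [Fintype m] {K : Type*} [RCLike K]

lemma frobNorm_sq (M : Matrix m m K) : frobNorm M ^ 2 = ∑ i, ∑ j, ‖M i j‖ ^ 2 :=
  Real.sq_sqrt (by positivity)

lemma frobNorm_fromBlocks_sq (A B C D : Matrix m m K) :
    frobNorm (fromBlocks A B C D) ^ 2
      = frobNorm A ^ 2 + frobNorm B ^ 2 + frobNorm C ^ 2 + frobNorm D ^ 2 := by
  simp only [frobNorm_sq, Fintype.sum_sum_type, fromBlocks_apply₁₁, fromBlocks_apply₁₂,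
    fromBlocks_apply₂₁, fromBlocks_apply₂₂, Finset.sum_add_distrib]
  ring

lemma frobNorm_smul_sq (c : K) (M : Matrix m m K) :
    frobNorm (c • M) ^ 2 = ‖c‖ ^ 2 * frobNorm M ^ 2 := by
  simp only [frobNorm_sq, Matrix.smul_apply, smul_eq_mul, norm_mul, mul_pow, Finset.mul_sum]

lemma frobNorm_neg (M : Matrix m m K) : frobNorm (-M) = frobNorm M := by
  simp only [frobNorm, Matrix.neg_apply, norm_neg]

lemma frobNorm_zero : frobNorm (0 : Matrix m m K) = 0 := by
  simp [frobNorm]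

lemma frobNorm_diagonal_sq [DecidableEq m] (d : m → K) :
    frobNorm (diagonal d) ^ 2 = ∑ i, ‖d i‖ ^ 2 := by
  rw [frobNorm_sq]
  refine Finset.sum_congr rfl fun i _ => ?_
  rw [Finset.sum_eq_single i (fun j _ hj => by simp [diagonal_apply_ne _ hj.symm]) (by simp),
    diagonal_apply_eq]

lemma frobNorm_one_sq [DecidableEq m] : frobNorm (1 : Matrix m m K) ^ 2 = Fintype.card m := by
  simp [← diagonal_one, frobNorm_diagonal_sq]

end Frobenius

section Degrees

variable (n : ℕ) (ω : Fin n × Fin n → Bool)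

lemma adjMatrix_sq (i j : Fin n) : adjMatrix n ω i j ^ 2 = adjMatrix n ω i j := by
  unfold adjMatrix; split_ifs <;> norm_num

lemma adjMatrix_nonneg (i j : Fin n) : 0 ≤ adjMatrix n ω i j := by
  unfold adjMatrix; split_ifs <;> norm_num

lemma adjMatrix_self (i : Fin n) : adjMatrix n ω i i = 0 := by
  simp [adjMatrix]

lemma adjMatrix_apply_of_ne {i j : Fin n} (h : i ≠ j) :
    adjMatrix n ω i j = if ω (min i j, max i j) then 1 else 0 := by
  rcases h.lt_or_gt with h | h
  · simp [adjMatrix, h, h.le]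
  · simp [adjMatrix, h, h.le, h.not_gt]

lemma deg_nonneg (i : Fin n) : 0 ≤ deg n ω i :=
  Finset.sum_nonneg fun j _ => adjMatrix_nonneg n ω i j

lemma frobNorm_adjMatrix_sq : frobNorm (adjMatrix n ω) ^ 2 = ∑ i, deg n ω i := by
  simp only [frobNorm_sq, Real.norm_eq_abs, sq_abs, adjMatrix_sq, deg]

def incidentPairs (i : Fin n) : Finset (Fin n × Fin n) :=
  (Finset.univ.erase i).image fun j => (min i j, max i j)

lemma card_incidentPairs_le (i : Fin n) : (incidentPairs n i).card ≤ n :=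
  Finset.card_image_le.trans (Finset.card_erase_le.trans_eq (Finset.card_fin n))

lemma deg_eq_sum_incidentPairs (i : Fin n) :
    deg n ω i = ∑ c ∈ incidentPairs n i, if ω c then (1 : ℝ) else 0 := by
  have hinj : Set.InjOn (fun j => (min i j, max i j)) (Finset.univ.erase i) := by
    intro j hj k hk h
    simp only [Finset.coe_erase, Finset.coe_univ, Set.mem_diff, Set.mem_univ,
      Set.mem_singleton_iff, true_and, Prod.mk.injEq, Fin.ext_iff, Fin.coe_min,
      Fin.coe_max] at hj hk h ⊢
    omega
  rw [deg, ← Finset.add_sum_erase _ _ (Finset.mem_univ i), adjMatrix_self, zero_add,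
    incidentPairs, Finset.sum_image hinj]
  exact Finset.sum_congr rfl fun j hj => adjMatrix_apply_of_ne n ω (Finset.ne_of_mem_erase hj).symm

end Degrees

section FrobeniusNorms

variable (n : ℕ) (q : ℝ) (ω : Fin n × Fin n → Bool)

lemma frobNorm_Ht0mat_sq (hα : 0 ≤ ((n : ℝ) - 1) * q - 1) :
    frobNorm (Ht0mat n q ω) ^ 2 = (((n : ℝ) - 1) * q - 1)⁻¹ * ∑ i, deg n ω i + 2 * n := by
  rw [Ht0mat, frobNorm_fromBlocks_sq, frobNorm_smul_sq, frobNorm_neg, frobNorm_adjMatrix_sq,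
    frobNorm_one_sq, frobNorm_zero, norm_inv, Real.norm_of_nonneg (Real.sqrt_nonneg _), inv_pow,
    Real.sq_sqrt hα, Fintype.card_fin]
  ring

lemma Ht0mat_add_Emat :
    Ht0mat n q ω + Emat n q ω
      = fromBlocks ((Real.sqrt (((n : ℝ) - 1) * q - 1))⁻¹ • adjMatrix n ω)
          (diagonal fun i => (((n : ℝ) - 1) * q - 1)⁻¹ * (1 - deg n ω i)) 1 0 := by
  rw [Ht0mat, Emat, fromBlocks_add, neg_add_cancel_left, ← diagonal_one, diagonal_sub,
    ← diagonal_smul]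
  simp [Pi.smul_def]

lemma frobNorm_Ht0mat_add_Emat_sq (hα : 0 ≤ ((n : ℝ) - 1) * q - 1) :
    frobNorm (Ht0mat n q ω + Emat n q ω) ^ 2 = (((n : ℝ) - 1) * q - 1)⁻¹ * ∑ i, deg n ω i
      + ∑ i, ((((n : ℝ) - 1) * q - 1)⁻¹ * (1 - deg n ω i)) ^ 2 + n := by
  rw [Ht0mat_add_Emat, frobNorm_fromBlocks_sq, frobNorm_smul_sq, frobNorm_adjMatrix_sq,
    frobNorm_diagonal_sq, frobNorm_one_sq, frobNorm_zero]
  simp [Real.sq_sqrt hα, mul_pow, sq_abs]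

variable {n q ω} {K α : ℝ}

lemma inv_mul_sum_deg_le (hα : 0 < α) (hdeg : ∀ i, deg n ω i ≤ K * α) :
    α⁻¹ * ∑ i, deg n ω i ≤ K * n := by
  rw [inv_mul_le_iff₀ hα]
  calc ∑ i, deg n ω i ≤ ∑ _i : Fin n, K * α := Finset.sum_le_sum fun i _ => hdeg i
    _ = α * (K * n) := by
      rw [Finset.sum_const, Finset.card_univ, Fintype.card_fin, nsmul_eq_mul]; ring

lemma frobNorm_Ht0mat_sq_le (hα : 1 ≤ ((n : ℝ) - 1) * q - 1)
    (hdeg : ∀ i, deg n ω i ≤ K * (((n : ℝ) - 1) * q - 1)) :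
    frobNorm (Ht0mat n q ω) ^ 2 ≤ (K + 2) * n := by
  rw [frobNorm_Ht0mat_sq n q ω (by linarith)]
  linarith [inv_mul_sum_deg_le (by linarith) hdeg]

lemma frobNorm_Ht0mat_add_Emat_sq_le (hα : 1 ≤ ((n : ℝ) - 1) * q - 1)
    (hdeg : ∀ i, deg n ω i ≤ K * (((n : ℝ) - 1) * q - 1)) :
    frobNorm (Ht0mat n q ω + Emat n q ω) ^ 2 ≤ (K + (K + 1) ^ 2 + 1) * n := by
  set α := ((n : ℝ) - 1) * q - 1
  have hdiag (i : Fin n) : (α⁻¹ * (1 - deg n ω i)) ^ 2 ≤ (K + 1) ^ 2 := by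
    have hd := deg_nonneg n ω i
    rw [mul_pow, inv_pow, inv_mul_le_iff₀ (by positivity), ← mul_pow]
    exact sq_le_sq' (by nlinarith [hdeg i]) (by nlinarith [hdeg i])
  have hdiag_sum : ∑ i, (α⁻¹ * (1 - deg n ω i)) ^ 2 ≤ (K + 1) ^ 2 * n := by
    calc _ ≤ ∑ _i : Fin n, (K + 1) ^ 2 := Finset.sum_le_sum fun i _ => hdiag i
      _ = (K + 1) ^ 2 * n := by simp [mul_comm]
  rw [frobNorm_Ht0mat_add_Emat_sq n q ω (by linarith)]
  linarith [inv_mul_sum_deg_le (by linarith) hdeg]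

end FrobeniusNorms

section Chernoff

open ProbabilityTheory

lemma integral_bern {q : ℝ} (h0 : 0 ≤ q) (h1 : q ≤ 1) (f : Bool → ℝ) :
    ∫ x, f x ∂bern q = (1 - q) * f false + q * f true := by
  have hq : min q.toNNReal 1 = q.toNNReal := min_eq_left (Real.toNNReal_le_one.mpr h1)
  rw [bern, PMF.integral_eq_sum, Fintype.sum_bool, PMF.bernoulli_apply, PMF.bernoulli_apply]
  simp only [cond_true, cond_false, hq, ENNReal.coe_toReal,
    NNReal.coe_sub (Real.toNNReal_le_one.mpr h1), NNReal.coe_one, Real.coe_toNNReal _ h0,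
    smul_eq_mul]
  ring

lemma mgf_bern_le {q : ℝ} (h0 : 0 ≤ q) (h1 : q ≤ 1) (t : ℝ) :
    mgf (fun x : Bool => if x then (1 : ℝ) else 0) (bern q) t
      ≤ Real.exp (q * (Real.exp t - 1)) := by
  rw [mgf, integral_bern h0 h1]
  simp only [Bool.false_eq_true, if_false, if_true, mul_zero, mul_one, Real.exp_zero]
  linarith [Real.add_one_le_exp (q * (Real.exp t - 1))]

variable {ι : Type*} [Fintype ι] {q : ℝ}

lemma mgf_sum_pi_bern_le (h0 : 0 ≤ q) (h1 : q ≤ 1) (S : Finset ι) (t : ℝ) :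
    mgf (fun ω : ι → Bool => ∑ c ∈ S, if ω c then (1 : ℝ) else 0)
        (Measure.pi fun _ => bern q) t
      ≤ Real.exp (S.card * (q * (Real.exp t - 1))) := by
  have hindep := iIndepFun_pi (μ := fun _ : ι => bern q)
    (X := fun _ (x : Bool) => if x then (1 : ℝ) else 0)
    fun _ => (measurable_of_countable _).aemeasurable
  have hcoord (c : ι) : mgf (fun ω : ι → Bool => if ω c then (1 : ℝ) else 0)
      (Measure.pi fun _ => bern q) t
        = mgf (fun x : Bool => if x then (1 : ℝ) else 0) (bern q) t := by
    change mgf ((fun x : Bool => if x then (1 : ℝ) else 0) ∘ fun ω : ι → Bool => ω c) _ t = _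
    rw [← mgf_map (Y := fun ω : ι → Bool => ω c) (measurable_pi_apply c).aemeasurable
      (measurable_of_countable _).aestronglyMeasurable, (measurePreserving_eval _ c).map_eq]
  calc mgf (fun ω : ι → Bool => ∑ c ∈ S, if ω c then (1 : ℝ) else 0)
          (Measure.pi fun _ => bern q) t
      = ∏ _c ∈ S, mgf (fun x : Bool => if x then (1 : ℝ) else 0) (bern q) t := by
        simpa only [Finset.sum_fn, hcoord] using
          hindep.mgf_sum (fun _ => measurable_of_countable _) S (t := t)
    _ ≤ ∏ _c ∈ S, Real.exp (q * (Real.exp t - 1)) :=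
        Finset.prod_le_prod (fun _ _ => mgf_nonneg) fun _ _ => mgf_bern_le h0 h1 t
    _ = Real.exp (S.card * (q * (Real.exp t - 1))) := by
        rw [Finset.prod_const, Real.exp_nat_mul]

/-- The Chernoff bound at `t = 1`; the threshold `3` makes the exponent work since `e - 1 ≤ 2`. -/
lemma measure_sum_pi_bern_ge_le (h0 : 0 ≤ q) (h1 : q ≤ 1) (S : Finset ι) {m : ℝ}
    (hS : (S.card : ℝ) ≤ m) :
    (Measure.pi fun _ => bern q) {ω | 3 * (m * q) ≤ ∑ c ∈ S, if ω c then (1 : ℝ) else 0}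
      ≤ ENNReal.ofReal (Real.exp (-(m * q))) := by
  have he : 0 ≤ Real.exp 1 - 1 ∧ Real.exp 1 - 1 ≤ 2 :=
    ⟨by linarith [Real.add_one_le_exp 1], by linarith [Real.exp_one_lt_d9]⟩
  have hcard : S.card * (q * (Real.exp 1 - 1)) ≤ m * (q * (Real.exp 1 - 1)) :=
    mul_le_mul_of_nonneg_right hS (mul_nonneg h0 he.1)
  have hmq : 0 ≤ m * q := mul_nonneg ((Nat.cast_nonneg _).trans hS) h0
  rw [ENNReal.le_ofReal_iff_toReal_le (measure_ne_top _ _) (Real.exp_pos _).le,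
    ← measureReal_def]
  calc _ ≤ Real.exp (-1 * (3 * (m * q))) * mgf (fun ω : ι → Bool => ∑ c ∈ S,
          if ω c then (1 : ℝ) else 0) (Measure.pi fun _ => bern q) 1 :=
        measure_ge_le_exp_mul_mgf _ zero_le_one Integrable.of_finite
    _ ≤ Real.exp (-1 * (3 * (m * q))) * Real.exp (S.card * (q * (Real.exp 1 - 1))) := by
        gcongr; exact mgf_sum_pi_bern_le h0 h1 S 1
    _ ≤ Real.exp (-(m * q)) := by
        rw [← Real.exp_add]
        gcongr
        nlinarith [he.2]

end Chernoff

def highDegreeSet (n : ℕ) (q : ℝ) : Set (Fin n × Fin n → Bool) :=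
  {ω | ∃ i, 3 * (n * q) ≤ deg n ω i}

lemma measurableSet_highDegreeSet (n : ℕ) (q : ℝ) : MeasurableSet (highDegreeSet n q) :=
  (Set.toFinite _).measurableSet

lemma edgeMeasure_highDegreeSet_le (n : ℕ) {q : ℝ} (h0 : 0 ≤ q) (h1 : q ≤ 1) :
    edgeMeasure n q (highDegreeSet n q) ≤ ENNReal.ofReal (n * Real.exp (-(n * q))) := by
  have hset : highDegreeSet n q = ⋃ i, {ω | 3 * (n * q) ≤ deg n ω i} := by
    ext ω; simp [highDegreeSet]
  calc edgeMeasure n q (highDegreeSet n q)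
      ≤ ∑ i : Fin n, edgeMeasure n q {ω | 3 * (n * q) ≤ deg n ω i} :=
        hset ▸ measure_iUnion_fintype_le _ _
    _ ≤ ∑ _i : Fin n, ENNReal.ofReal (Real.exp (-(n * q))) := by
        gcongr with i
        simp only [deg_eq_sum_incidentPairs]
        exact measure_sum_pi_bern_ge_le h0 h1 _ (mod_cast card_incidentPairs_le n i)
    _ = ENNReal.ofReal (n * Real.exp (-(n * q))) := by
        rw [Finset.sum_const, Finset.card_univ, Fintype.card_fin, nsmul_eq_mul,
          ENNReal.ofReal_mul (Nat.cast_nonneg n), ENNReal.ofReal_natCast]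

/-- Off the high-degree event every degree is below `3nq ≤ 4α`, where `α ≥ nq - 2 ≥ 6`. -/
lemma frobNorm_sq_le_of_notMem_highDegreeSet {n : ℕ} {q : ℝ} {ω : Fin n × Fin n → Bool}
    (hq : q ≤ 1) (hnq : 8 ≤ n * q) (hω : ω ∉ highDegreeSet n q) :
    frobNorm (Ht0mat n q ω) ^ 2 ≤ 6 * n ∧ frobNorm (Ht0mat n q ω + Emat n q ω) ^ 2 ≤ 30 * n := by
  have hα : (n : ℝ) * q - 2 ≤ ((n : ℝ) - 1) * q - 1 := by linarith
  have hdeg (i : Fin n) : deg n ω i ≤ 4 * (((n : ℝ) - 1) * q - 1) := by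
    have : deg n ω i < 3 * (n * q) := not_le.mp fun h => hω ⟨i, h⟩
    linarith
  constructor
  · linarith [frobNorm_Ht0mat_sq_le (by linarith) hdeg]
  · linarith [frobNorm_Ht0mat_add_Emat_sq_le (by linarith) hdeg]

lemma eventually_mul_log_le {u : ℕ → ℝ}
    (hu : Tendsto (fun n : ℕ => u n / Real.log n) atTop atTop) (c : ℝ) :
    ∀ᶠ n : ℕ in atTop, c * Real.log n ≤ u n := by
  filter_upwards [hu.eventually_ge_atTop c,
    (Real.tendsto_log_atTop.comp tendsto_natCast_atTop_atTop).eventually_gt_atTop 0]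
    with n hc hpos
  exact (le_div_iff₀ hpos).1 hc

lemma summable_mul_exp_neg {u : ℕ → ℝ} (hu : ∀ᶠ n : ℕ in atTop, 3 * Real.log n ≤ u n) :
    Summable fun n : ℕ => n * Real.exp (-u n) := by
  refine (Real.summable_one_div_nat_pow.mpr one_lt_two).of_norm_bounded_eventually_nat ?_
  filter_upwards [hu, eventually_gt_atTop 0] with n hn hpos
  have hn0 : (0 : ℝ) < n := Nat.cast_pos.mpr hpos
  have hexp : Real.exp (3 * Real.log n) = (n : ℝ) ^ 3 := by
    rw [show (3 : ℝ) = (3 : ℕ) by norm_num, Real.exp_nat_mul, Real.exp_log hn0]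
  calc ‖(n : ℝ) * Real.exp (-u n)‖ = n * Real.exp (-u n) := by
        rw [Real.norm_of_nonneg (by positivity)]
    _ ≤ n * Real.exp (-(3 * Real.log n)) := by gcongr
    _ = 1 / (n : ℝ) ^ 2 := by
        rw [Real.exp_neg, hexp]; field_simp

lemma one_div_two_mul_le {x c : ℝ} {n : ℕ} (hc : 0 ≤ c) (h : x ≤ 2 * c * n) :
    1 / (2 * (n : ℝ)) * x ≤ c := by
  rcases n.eq_zero_or_pos with rfl | hn
  · simpa using hc
  · rw [one_div, inv_mul_le_iff₀ (by positivity)]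
    linarith

lemma exists_forall_le_of_eventually_le {f : ℕ → ℝ} {c : ℝ} (h : ∀ᶠ n in atTop, f n ≤ c) :
    ∃ C, ∀ n, f n ≤ C :=
  let ⟨C, hC⟩ := (isBoundedUnder_of_eventually_le h).bddAbove_range
  ⟨C, fun n => hC ⟨n, rfl⟩⟩

theorem stmt10_general (p₀ : ℝ) (hp₀ : p₀ ∈ Set.Ioo (0 : ℝ) 1)
    (p : ℕ → ℝ) (hp : ∀ n, 0 < p n ∧ p n ≤ p₀)
    (hgrow : Tendsto (fun n : ℕ => (n : ℝ) * p n / Real.log n) atTop atTop)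
    (Ω : Type*) [MeasurableSpace Ω] (ℙ : Measure Ω)
    (X : (n : ℕ) → Ω → (Fin n × Fin n → Bool))
    (hXmeas : ∀ n, Measurable (X n))
    (hXlaw : ∀ n, Measure.map (X n) ℙ = edgeMeasure n (p n)) :
    ∀ᵐ ω ∂ℙ,
      (∃ C : ℝ, ∀ n : ℕ,
        (1 / (2 * (n : ℝ))) * frobNorm (Ht0mat n (p n) (X n ω)) ^ 2 ≤ C) ∧
      (∃ C : ℝ, ∀ n : ℕ,
        (1 / (2 * (n : ℝ))) *
          frobNorm (Ht0mat n (p n) (X n ω) + Emat n (p n) (X n ω)) ^ 2 ≤ C) := by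
  have hq (n : ℕ) : 0 ≤ p n ∧ p n ≤ 1 := ⟨(hp n).1.le, (hp n).2.trans hp₀.2.le⟩
  have hlog := eventually_mul_log_le hgrow 3
  have hnq : ∀ᶠ n : ℕ in atTop, 8 ≤ n * p n := by
    filter_upwards [hlog, (Real.tendsto_log_atTop.comp
      tendsto_natCast_atTop_atTop).eventually_ge_atTop 3] with n h (h3 : 3 ≤ Real.log n)
    linarith
  have hsum : ∑' n, ℙ (X n ⁻¹' highDegreeSet n (p n)) ≠ ∞ := by
    refine ne_top_of_le_ne_top ENNReal.ofReal_ne_top ((ENNReal.tsum_le_tsum fun n => ?_).trans_eq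
      (ENNReal.ofReal_tsum_of_nonneg (fun n => by positivity) (summable_mul_exp_neg hlog)).symm)
    rw [← Measure.map_apply (hXmeas n) (measurableSet_highDegreeSet n _), hXlaw n]
    exact edgeMeasure_highDegreeSet_le n (hq n).1 (hq n).2
  filter_upwards [ae_eventually_notMem hsum] with ω hω
  have hbound := (hω.and hnq).mono fun n h =>
    frobNorm_sq_le_of_notMem_highDegreeSet (hq n).2 h.2 h.1
  exact ⟨exists_forall_le_of_eventually_le (c := 3) (hbound.mono fun n h =>
      one_div_two_mul_le (by norm_num) (by linarith [h.1])),
    exists_forall_le_of_eventually_le (c := 15) (hbound.mono fun n h =>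
      one_div_two_mul_le (by norm_num) (by linarith [h.2]))⟩

/-- almost surely, both `(1/(2n))‖H̃₀‖_F²` and `(1/(2n))‖H̃₀+E‖_F²`
are bounded sequences. -/
theorem stmt10 (p₀ : ℝ) (hp₀ : p₀ ∈ Set.Ioo (0 : ℝ) 1)
    (p : ℕ → ℝ) (hp : ∀ n, 0 < p n ∧ p n ≤ p₀)
    (hgrow : Tendsto (fun n : ℕ => (n : ℝ) * p n / Real.log n) atTop atTop)
    (Ω : Type*) [MeasurableSpace Ω] (ℙ : Measure Ω) [IsProbabilityMeasure ℙ]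
    (X : (n : ℕ) → Ω → (Fin n × Fin n → Bool))
    (hXmeas : ∀ n, Measurable (X n))
    (hXlaw : ∀ n, Measure.map (X n) ℙ = edgeMeasure n (p n))
    (hXindep : ProbabilityTheory.iIndepFun X ℙ) :
    ∀ᵐ ω ∂ℙ,
      (∃ C : ℝ, ∀ n : ℕ,
        (1 / (2 * (n : ℝ))) * frobNorm (Ht0mat n (p n) (X n ω)) ^ 2 ≤ C) ∧
      (∃ C : ℝ, ∀ n : ℕ,
        (1 / (2 * (n : ℝ))) *
          frobNorm (Ht0mat n (p n) (X n ω) + Emat n (p n) (X n ω)) ^ 2 ≤ C) :=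
  stmt10_general p₀ hp₀ p hp hgrow Ω ℙ X hXmeas hXlaw

end
end

section
/- Let z ∈ ℂ satisfy Im(z) ≠ 0 and |z| ≠ 1. Then there exists a constant C_z > 0, depending only on z, such that for every n ≥ 1 and every Hermitian n×n complex matrix M, the 2n×2n matrix [[M, −I],[I, 0]] − z·I is invertible and ‖([[M, −I],[I, 0]] − z·I)^{−1}‖ ≤ C_z; equivalently, every singular value of [[M, −I],[I, 0]] − z·I is at least 1/C_z. -/
open Matrix

noncomputable section

/-!
Write `x = (u, v)` and `(L - z) x = (a, b)` for `L = [[M, -I], [I, 0]]`, so that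
`a = M u - v - z u` and `b = u - z v`. Eliminating `v = z⁻¹ (u - b)` leaves
`(M - (z + z⁻¹)) u = a - z⁻¹ b`. For Hermitian `M` and any `w`, `‖(M - w) u‖ ≥ |Im w| ‖u‖`,
and `Im (z + z⁻¹) = Im z (1 - |z|⁻²)` vanishes only if `Im z = 0` or `|z| = 1`.
Hence `‖u‖`, then `‖v‖`, and so `‖x‖` are bounded by a multiple of `‖(L - z) x‖` that depends
on `z` alone; such a lower bound makes `L - z` invertible with inverse of norm at most that
multiple.
-/

theorem Complex.im_add_inv_ne_zero {z : ℂ} (h_im : z.im ≠ 0) (h_norm : ‖z‖ ≠ 1) :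
    (z + z⁻¹).im ≠ 0 := by
  have h_normSq : normSq z ≠ 1 := by
    rwa [normSq_eq_norm_sq, Ne, pow_eq_one_iff_of_nonneg (norm_nonneg z) two_ne_zero]
  have h_eq : (z + z⁻¹).im = z.im * (1 - (normSq z)⁻¹) := by
    rw [add_im, inv_im]
    field_simp
    ring
  rw [h_eq]
  exact mul_ne_zero h_im (sub_ne_zero.mpr (Ne.symm (inv_ne_one.mpr h_normSq)))

def resolventBound (z : ℂ) : ℝ := (1 + ‖z‖⁻¹) ^ 2 * |(z + z⁻¹).im|⁻¹ + ‖z‖⁻¹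

theorem resolventBound_pos {z : ℂ} (hw : (z + z⁻¹).im ≠ 0) : 0 < resolventBound z := by
  have : 0 < |(z + z⁻¹).im| := abs_pos.mpr hw
  unfold resolventBound
  positivity

namespace LinearMap.IsSymmetric

variable {E : Type*} [NormedAddCommGroup E] [InnerProductSpace ℂ E] {T : E →ₗ[ℂ] E}

theorem abs_im_mul_norm_le_norm_sub_smul (hT : T.IsSymmetric) (w : ℂ) (u : E) :
    |w.im| * ‖u‖ ≤ ‖T u - w • u‖ := by
  rcases (norm_nonneg u).eq_or_lt' with hu | hu
  · simp [hu]
  have him : (inner ℂ u (T u - w • u)).im = -(w.im * ‖u‖ ^ 2) := by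
    have hreal : (inner ℂ u (T u)).im = 0 := hT.im_inner_self_apply u
    rw [inner_sub_right, inner_smul_right, inner_self_eq_norm_sq_to_K, Complex.sub_im, hreal]
    simp [← Complex.ofReal_pow]
  refine le_of_mul_le_mul_right ?_ hu
  calc |w.im| * ‖u‖ * ‖u‖ = |(inner ℂ u (T u - w • u)).im| := by
        rw [him, abs_neg, abs_mul, abs_of_nonneg (sq_nonneg ‖u‖)]; ring
    _ ≤ ‖inner ℂ u (T u - w • u)‖ := Complex.abs_im_le_norm _
    _ ≤ ‖u‖ * ‖T u - w • u‖ := norm_inner_le_norm _ _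
    _ = ‖T u - w • u‖ * ‖u‖ := mul_comm _ _

theorem norm_add_norm_le_resolventBound (hT : T.IsSymmetric) {z : ℂ} (hz : z ≠ 0)
    (hw : (z + z⁻¹).im ≠ 0) {u v : E} {R : ℝ}
    (ha : ‖T u - v - z • u‖ ≤ R) (hb : ‖u - z • v‖ ≤ R) :
    ‖u‖ + ‖v‖ ≤ resolventBound z * R := by
  set a := T u - v - z • u
  set b := u - z • v
  set s := ‖z‖⁻¹
  set t := |(z + z⁻¹).im|
  have ht : 0 < t := abs_pos.mpr hw
  have hs : 0 ≤ s := by positivity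
  have hR : 0 ≤ R := (norm_nonneg _).trans hb
  have hu_eq : T u - (z + z⁻¹) • u = a - z⁻¹ • b := by
    simp only [a, b, smul_sub, inv_smul_smul₀ hz, add_smul]
    abel
  have hv_eq : v = z⁻¹ • (u - b) := by
    rw [sub_sub_cancel, inv_smul_smul₀ hz]
  have hu : t * ‖u‖ ≤ (1 + s) * R :=
    calc t * ‖u‖ ≤ ‖a - z⁻¹ • b‖ := hu_eq ▸ hT.abs_im_mul_norm_le_norm_sub_smul _ u
      _ ≤ ‖a‖ + s * ‖b‖ := (norm_sub_le _ _).trans_eq (by rw [norm_smul, norm_inv])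
      _ ≤ (1 + s) * R := by nlinarith
  have hv : ‖v‖ ≤ s * (‖u‖ + R) := by
    rw [hv_eq, norm_smul, norm_inv]
    gcongr
    exact (norm_sub_le _ _).trans (by gcongr)
  calc ‖u‖ + ‖v‖ ≤ (1 + s) * ‖u‖ + s * R := by nlinarith
    _ ≤ (1 + s) * (t⁻¹ * ((1 + s) * R)) + s * R := by
        gcongr
        rwa [le_inv_mul_iff₀ ht]
    _ = resolventBound z * R := by unfold resolventBound; ring

end LinearMap.IsSymmetric

namespace EuclideanSpace

variable {𝕜 : Type*} [RCLike 𝕜] {ι κ : Type*} [Fintype ι] [Fintype κ]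

theorem norm_sq_eq_sumEquivProd (x : EuclideanSpace 𝕜 (ι ⊕ κ)) :
    ‖x‖ ^ 2 = ‖(sumEquivProd x).1‖ ^ 2 + ‖(sumEquivProd x).2‖ ^ 2 := by
  simp [norm_sq_eq, Fintype.sum_sum_type]

theorem norm_sumEquivProd_fst_le (x : EuclideanSpace 𝕜 (ι ⊕ κ)) :
    ‖(sumEquivProd x).1‖ ≤ ‖x‖ := by
  nlinarith [norm_sq_eq_sumEquivProd x, norm_nonneg x, norm_nonneg (sumEquivProd x).1]

theorem norm_sumEquivProd_snd_le (x : EuclideanSpace 𝕜 (ι ⊕ κ)) :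
    ‖(sumEquivProd x).2‖ ≤ ‖x‖ := by
  nlinarith [norm_sq_eq_sumEquivProd x, norm_nonneg x, norm_nonneg (sumEquivProd x).2]

theorem norm_le_norm_sumEquivProd_fst_add_snd (x : EuclideanSpace 𝕜 (ι ⊕ κ)) :
    ‖x‖ ≤ ‖(sumEquivProd x).1‖ + ‖(sumEquivProd x).2‖ := by
  nlinarith [norm_sq_eq_sumEquivProd x, norm_nonneg x, norm_nonneg (sumEquivProd x).1,
    norm_nonneg (sumEquivProd x).2]

end EuclideanSpace

namespace Matrix

open EuclideanSpace (sumEquivProd)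

variable {𝕜 : Type*} [RCLike 𝕜] {ι : Type*} [Fintype ι] [DecidableEq ι]

theorem sumEquivProd_toEuclideanLin_companion_fst (M : Matrix ι ι 𝕜) (z : 𝕜)
    (x : EuclideanSpace 𝕜 (ι ⊕ ι)) :
    (sumEquivProd (toEuclideanLin (fromBlocks M (-1) 1 0 - z • 1 : Matrix (ι ⊕ ι) (ι ⊕ ι) 𝕜)
        x)).1 =
      toEuclideanLin M (sumEquivProd x).1 - (sumEquivProd x).2 - z • (sumEquivProd x).1 := by
  ext i
  simp [fromBlocks_mulVec, neg_mulVec, sub_eq_add_neg]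
  rfl

theorem sumEquivProd_toEuclideanLin_companion_snd (M : Matrix ι ι 𝕜) (z : 𝕜)
    (x : EuclideanSpace 𝕜 (ι ⊕ ι)) :
    (sumEquivProd (toEuclideanLin (fromBlocks M (-1) 1 0 - z • 1 : Matrix (ι ⊕ ι) (ι ⊕ ι) 𝕜)
        x)).2 =
      (sumEquivProd x).1 - z • (sumEquivProd x).2 := by
  ext i
  simp [fromBlocks_mulVec]

theorem IsHermitian.norm_le_resolventBound_mul_norm_companion {M : Matrix ι ι ℂ}
    (hM : M.IsHermitian) {z : ℂ} (hz : z ≠ 0) (hw : (z + z⁻¹).im ≠ 0)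
    (x : EuclideanSpace ℂ (ι ⊕ ι)) :
    ‖x‖ ≤ resolventBound z *
      ‖toEuclideanLin (Matrix.fromBlocks M (-1) 1 0 - z • 1 : Matrix (ι ⊕ ι) (ι ⊕ ι) ℂ) x‖ := by
  set y := toEuclideanLin (Matrix.fromBlocks M (-1) 1 0 - z • 1 : Matrix (ι ⊕ ι) (ι ⊕ ι) ℂ) x
  have hT : (toEuclideanLin M).IsSymmetric := isSymmetric_toEuclideanLin_iff.mpr hM
  calc ‖x‖ ≤ ‖(sumEquivProd x).1‖ + ‖(sumEquivProd x).2‖ :=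
        EuclideanSpace.norm_le_norm_sumEquivProd_fst_add_snd x
    _ ≤ resolventBound z * ‖y‖ := hT.norm_add_norm_le_resolventBound hz hw
        (by rw [← sumEquivProd_toEuclideanLin_companion_fst]
            exact EuclideanSpace.norm_sumEquivProd_fst_le y)
        (by rw [← sumEquivProd_toEuclideanLin_companion_snd]
            exact EuclideanSpace.norm_sumEquivProd_snd_le y)

theorem isUnit_and_opNorm_inv_le_of_norm_le {m : Type*} [Fintype m] [DecidableEq m]
    {A : Matrix m m 𝕜} {C : ℝ} (hC : 0 ≤ C) (h : ∀ x, ‖x‖ ≤ C * ‖toEuclideanLin A x‖) :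
    IsUnit A ∧ opNorm A⁻¹ ≤ C := by
  have hA : IsUnit A := by
    refine mulVec_injective_iff_isUnit.mp fun p q hpq => sub_eq_zero.mp ?_
    have := h (WithLp.toLp 2 (p - q))
    rw [toLpLin_toLp, toLin'_apply, mulVec_sub, hpq, sub_self, WithLp.toLp_zero, norm_zero,
      mul_zero, norm_le_zero_iff] at this
    simpa using congrArg WithLp.ofLp this
  refine ⟨hA, ContinuousLinearMap.opNorm_le_bound _ hC fun y => ?_⟩
  have hinv : toEuclideanLin A (toEuclideanLin A⁻¹ y) = y := by
    ext i
    simp [mulVec_mulVec, mul_nonsing_inv A ((isUnit_iff_isUnit_det A).mp hA)]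
  exact (h (toEuclideanLin A⁻¹ y)).trans_eq (by rw [hinv])

end Matrix

/-- for `z` with `Im z ≠ 0` and `|z| ≠ 1` there is `C_z > 0` such that
for every `n` and every Hermitian `M`, `[[M,−I],[I,0]] − zI` is invertible with inverse
of operator norm at most `C_z`. -/
theorem stmt11 (z : ℂ) (hz_im : z.im ≠ 0) (hz_abs : ‖z‖ ≠ 1) :
    ∃ C : ℝ, 0 < C ∧ ∀ (n : ℕ) (M : Matrix (Fin n) (Fin n) ℂ), M.IsHermitian →
      IsUnit (Matrix.fromBlocks M (-1) 1 0 -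
          z • (1 : Matrix (Fin n ⊕ Fin n) (Fin n ⊕ Fin n) ℂ)) ∧
      opNorm ((Matrix.fromBlocks M (-1) 1 0 -
          z • (1 : Matrix (Fin n ⊕ Fin n) (Fin n ⊕ Fin n) ℂ))⁻¹) ≤ C := by
  have hz : z ≠ 0 := fun h => hz_im (by simp [h])
  have hw := Complex.im_add_inv_ne_zero hz_im hz_abs
  exact ⟨resolventBound z, resolventBound_pos hw, fun n M hM =>
    isUnit_and_opNorm_inv_le_of_norm_le (resolventBound_pos hw).le
      (hM.norm_le_resolventBound_mul_norm_companion hz hw)⟩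

end
end

section
/- Let a, b be real numbers with b ≠ 0 and a² + b² ≠ 1. Then there exists a constant C > 0, depending only on a and b, such that for every real number λ: 1 + a² + b² + λ²/2 − aλ − (1/2)·√( (λ² − 2aλ)² + 4λ² + 16b² ) ≥ C. -/
set_option maxHeartbeats 1600000 in
/-- for real `a, b` with `b ≠ 0` and `a² + b² ≠ 1` there is a constant
`C > 0` such that for every real `λ`,
`1 + a² + b² + λ²/2 − aλ − (1/2)√((λ² − 2aλ)² + 4λ² + 16b²) ≥ C`. -/
theorem stmt12 (a b : ℝ) (hb : b ≠ 0) (hab : a ^ 2 + b ^ 2 ≠ 1) :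
    ∃ C : ℝ, 0 < C ∧ ∀ lam : ℝ,
      1 + a ^ 2 + b ^ 2 + lam ^ 2 / 2 - a * lam -
        (1 / 2) * Real.sqrt ((lam ^ 2 - 2 * a * lam) ^ 2 + 4 * lam ^ 2 + 16 * b ^ 2) ≥
      C := by
  set s : ℝ := 1 + a ^ 2 + b ^ 2 with hs
  set e : ℝ := a ^ 2 + b ^ 2 with he
  have hb2 : 0 < b ^ 2 := by positivity
  have he0 : 0 < e := by nlinarith [sq_nonneg a]
  have hd0 : 0 < b ^ 2 * (e - 1) ^ 2 := by
    have h1 : e - 1 ≠ 0 := fun h => hab (by nlinarith)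
    have h2 : 0 < (e - 1) ^ 2 := by positivity
    positivity
  set d : ℝ := b ^ 2 * (e - 1) ^ 2 with hd
  set K : ℝ := 3 * s ^ 2 + 1 with hK
  have hK0 : 0 < K := by positivity
  set C : ℝ := min (min (e / 2) 1) (d / (2 * K)) with hC
  have hC0 : 0 < C := by
    apply lt_min (lt_min (by linarith) one_pos)
    positivity
  have hCe : C ≤ e / 2 := le_trans (min_le_left _ _) (min_le_left _ _)
  have hC1 : C ≤ 1 := le_trans (min_le_left _ _) (min_le_right _ _)
  have hCd : C ≤ d / (2 * K) := min_le_right _ _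
  have hCdK : C * K ≤ d / 2 := by
    calc C * K ≤ d / (2 * K) * K := by
          apply mul_le_mul_of_nonneg_right hCd (le_of_lt hK0)
      _ = d / 2 := by field_simp
  rw [hK] at hCdK
  have heC : 0 < e - C := by linarith
  -- key: g(s - C) ≥ d / 2
  have hg : (e - C) * ((s - C) ^ 2 - 4 * b ^ 2) - a ^ 2 * (s - C) ^ 2 ≥ d / 2 := by
    have hid : (e - C) * ((s - C) ^ 2 - 4 * b ^ 2) - a ^ 2 * (s - C) ^ 2 =
        d - C * (3 * s ^ 2 - 2 * s - 2 * a ^ 2 * s - 4 * b ^ 2)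
          + C ^ 2 * (3 * s - 1 - a ^ 2) - C ^ 3 := by
      simp only [hd, he, hs]; ring
    have h1 : C * (3 * s ^ 2 - 2 * s - 2 * a ^ 2 * s - 4 * b ^ 2) ≤ C * (3 * s ^ 2) := by
      apply mul_le_mul_of_nonneg_left _ (le_of_lt hC0)
      nlinarith [sq_nonneg a, sq_nonneg b]
    have h2 : 0 ≤ C ^ 2 * (3 * s - 1 - a ^ 2) := by
      apply mul_nonneg (sq_nonneg C)
      nlinarith [sq_nonneg b]
    have h3 : C ^ 3 ≤ C := by nlinarith [sq_nonneg C, hC0.le]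
    clear_value s e d K C
    linarith
  refine ⟨C, hC0, fun lam => ?_⟩
  set I : ℝ := (lam ^ 2 - 2 * a * lam) ^ 2 + 4 * lam ^ 2 + 16 * b ^ 2 with hI
  set M : ℝ := lam ^ 2 - 2 * a * lam + 2 * s with hM
  clear_value s e d K C I M
  have hM2C : 0 ≤ M - 2 * C := by
    simp only [hM, hs]
    nlinarith [sq_nonneg (lam - a), sq_nonneg b]
  have key : (e - C) * ((M - 2 * C) ^ 2 - I) =
      (2 * (e - C) * lam + 2 * a * (C - s)) ^ 2 +
      4 * ((e - C) * ((s - C) ^ 2 - 4 * b ^ 2) - a ^ 2 * (s - C) ^ 2) := by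
    simp only [hI, hM, he, hs]; ring
  have hpos : 0 ≤ (e - C) * ((M - 2 * C) ^ 2 - I) := by
    rw [key]
    linarith [sq_nonneg (2 * (e - C) * lam + 2 * a * (C - s)), hg, hd0]
  have hQ : I ≤ (M - 2 * C) ^ 2 := by
    have h := (mul_nonneg_iff_of_pos_left heC).mp hpos
    linarith
  have hsqrt : Real.sqrt I ≤ M - 2 * C := by
    calc Real.sqrt I ≤ Real.sqrt ((M - 2 * C) ^ 2) := Real.sqrt_le_sqrt hQ
      _ = M - 2 * C := Real.sqrt_sq hM2C
  have hfin : (1 / 2) * Real.sqrt I ≤ (M - 2 * C) / 2 := by linarith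
  rw [hM] at hfin
  linarith
end

section
/- Let λ be a real number with λ ≠ 0, and let μ₁, μ₂ ∈ ℂ be the two roots of x² − λx + 1 = 0 (so μ₁ + μ₂ = λ and μ₁·μ₂ = 1). Define γ = (μ₁·conj(μ₂) + 1)/√((1 + |μ₁|²)(1 + |μ₂|²)). Then: (i) the eigenvalues of the 2×2 Hermitian matrix [[1, γ],[conj(γ), 1]] are 1 + |γ| and 1 − |γ|; (ii) if λ² < 4 then |γ| = |λ|/2; and (iii) if λ² > 4 then |γ| = 2/|λ|. -/
/-!
Since `μ₂ = μ₁⁻¹`, the numerator of `γ` is `2 Re μ₁ / conj μ₁` and the denominator is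
`(1 + |μ₁|²) / |μ₁|`, so `|γ| = 2 |Re μ₁| / (1 + |μ₁|²)`. Separating real and imaginary parts of
`μ₁² - λ μ₁ + 1 = 0`: for `λ² < 4` the root is non-real, hence `Re μ₁ = λ / 2` and `|μ₁| = 1`;
for `λ² > 4` it is real, hence `1 + μ₁² = λ μ₁`.
-/

open Matrix Polynomial ComplexConjugate

theorem charpoly_roots_fin_two_conj (a γ : ℂ) :
    (!![a, γ; conj γ, a] : Matrix (Fin 2) (Fin 2) ℂ).charpoly.roots =
      {a + (‖γ‖ : ℂ), a - (‖γ‖ : ℂ)} := by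
  have hchar : (!![a, γ; conj γ, a] : Matrix (Fin 2) (Fin 2) ℂ).charpoly =
      (X - C (a + (‖γ‖ : ℂ))) * (X - C (a - (‖γ‖ : ℂ))) := by
    rw [charpoly, det_fin_two, charmatrix_apply_eq, charmatrix_apply_eq,
      charmatrix_apply_ne _ _ _ (by decide), charmatrix_apply_ne _ _ _ (by decide)]
    simp only [of_apply, cons_val', cons_val_zero, cons_val_one, empty_val', cons_val_fin_one,
      map_add, map_sub]
    have hγ : C γ * C (conj γ) = C (‖γ‖ : ℂ) ^ 2 := by rw [← C_mul, Complex.mul_conj', C_pow]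
    linear_combination (-1 : ℂ[X]) * hγ
  rw [hchar, roots_mul (mul_ne_zero (X_sub_C_ne_zero _) (X_sub_C_ne_zero _)), roots_X_sub_C,
    roots_X_sub_C]
  rfl

theorem re_im_of_sq_sub_mul_add_one {l : ℝ} {μ : ℂ} (h : μ ^ 2 - l * μ + 1 = 0) :
    μ.re ^ 2 - μ.im ^ 2 - l * μ.re + 1 = 0 ∧ μ.im * (2 * μ.re - l) = 0 := by
  constructor
  · simpa [sq, Complex.mul_re] using congrArg Complex.re h
  · have := congrArg Complex.im h
    simp only [sq, Complex.add_im, Complex.sub_im, Complex.mul_im, Complex.ofReal_re,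
      Complex.ofReal_im, zero_mul, add_zero, Complex.one_im, Complex.zero_im] at this
    linear_combination this

theorem re_eq_and_norm_eq_one_of_sq_lt_four {l : ℝ} {μ : ℂ} (h : μ ^ 2 - l * μ + 1 = 0)
    (hl : l ^ 2 < 4) : μ.re = l / 2 ∧ ‖μ‖ = 1 := by
  obtain ⟨hre, him⟩ := re_im_of_sq_sub_mul_add_one h
  have him0 : μ.im ≠ 0 := by
    intro h0
    rw [h0] at hre
    nlinarith [sq_nonneg (2 * μ.re - l)]
  have hre' : μ.re = l / 2 := by linarith [(mul_eq_zero.mp him).resolve_left him0]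
  refine ⟨hre', ?_⟩
  rw [← pow_eq_one_iff_of_nonneg (norm_nonneg μ) two_ne_zero, Complex.sq_norm,
    Complex.normSq_apply]
  linear_combination -hre + 2 * μ.re * hre'

theorem im_eq_zero_of_four_lt_sq {l : ℝ} {μ : ℂ} (h : μ ^ 2 - l * μ + 1 = 0)
    (hl : 4 < l ^ 2) : μ.im = 0 := by
  obtain ⟨hre, him⟩ := re_im_of_sq_sub_mul_add_one h
  by_contra him0
  have hre' : μ.re = l / 2 := by linarith [(mul_eq_zero.mp him).resolve_left him0]
  rw [hre'] at hre
  nlinarith [sq_nonneg μ.im]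

theorem two_mul_abs_div_one_add_sq {l x : ℝ} (h : 1 + x ^ 2 = l * x) :
    2 * |x| / (1 + x ^ 2) = 2 / |l| := by
  have hx : x ≠ 0 := by rintro rfl; norm_num at h
  have hlx : l * x = |l| * |x| := by rw [← abs_mul, abs_of_pos (h ▸ by positivity)]
  rw [h, hlx]
  field_simp

theorem norm_coupling_inv {μ : ℂ} (hμ : μ ≠ 0) :
    ‖(μ * conj μ⁻¹ + 1) / ((√((1 + ‖μ‖ ^ 2) * (1 + ‖μ⁻¹‖ ^ 2)) : ℝ) : ℂ)‖ =
      2 * |μ.re| / (1 + ‖μ‖ ^ 2) := by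
  have hr : 0 < ‖μ‖ := norm_pos_iff.mpr hμ
  have hnum : μ * conj μ⁻¹ + 1 = 2 * μ.re / conj μ := by
    have hc : conj μ ≠ 0 := by simpa using hμ
    rw [map_inv₀, eq_div_iff hc, add_mul, mul_assoc, inv_mul_cancel₀ hc, mul_one, one_mul]
    exact_mod_cast Complex.add_conj μ
  have hden : √((1 + ‖μ‖ ^ 2) * (1 + ‖μ⁻¹‖ ^ 2)) = (1 + ‖μ‖ ^ 2) / ‖μ‖ := by
    rw [Real.sqrt_eq_iff_mul_self_eq_of_pos (by positivity), norm_inv]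
    field_simp
    ring
  rw [hden, norm_div, hnum, norm_div, Complex.norm_conj, norm_mul, Complex.norm_real,
    Complex.norm_real, Real.norm_eq_abs, Real.norm_of_nonneg (by positivity)]
  norm_num
  field_simp

theorem stmt17_general (lam : ℝ) (μ₁ μ₂ : ℂ)
    (hsum : μ₁ + μ₂ = (lam : ℂ)) (hprod : μ₁ * μ₂ = 1) :
    (!![1, (μ₁ * (starRingEnd ℂ) μ₂ + 1) /
          ((Real.sqrt ((1 + ‖μ₁‖ ^ 2) * (1 + ‖μ₂‖ ^ 2)) : ℝ) : ℂ);
        (starRingEnd ℂ) ((μ₁ * (starRingEnd ℂ) μ₂ + 1) /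
          ((Real.sqrt ((1 + ‖μ₁‖ ^ 2) * (1 + ‖μ₂‖ ^ 2)) : ℝ) : ℂ)),
        1] : Matrix (Fin 2) (Fin 2) ℂ).charpoly.roots =
      {((1 + ‖(μ₁ * (starRingEnd ℂ) μ₂ + 1) /
          ((Real.sqrt ((1 + ‖μ₁‖ ^ 2) * (1 + ‖μ₂‖ ^ 2)) : ℝ) : ℂ)‖ : ℝ) : ℂ),
       ((1 - ‖(μ₁ * (starRingEnd ℂ) μ₂ + 1) /
          ((Real.sqrt ((1 + ‖μ₁‖ ^ 2) * (1 + ‖μ₂‖ ^ 2)) : ℝ) : ℂ)‖ : ℝ) : ℂ)} ∧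
    (lam ^ 2 < 4 →
      ‖(μ₁ * (starRingEnd ℂ) μ₂ + 1) /
          ((Real.sqrt ((1 + ‖μ₁‖ ^ 2) * (1 + ‖μ₂‖ ^ 2)) : ℝ) : ℂ)‖ =
        |lam| / 2) ∧
    (lam ^ 2 > 4 →
      ‖(μ₁ * (starRingEnd ℂ) μ₂ + 1) /
          ((Real.sqrt ((1 + ‖μ₁‖ ^ 2) * (1 + ‖μ₂‖ ^ 2)) : ℝ) : ℂ)‖ =
        2 / |lam|) := by
  have hroot : μ₁ ^ 2 - lam * μ₁ + 1 = 0 := by linear_combination μ₁ * hsum - hprod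
  have hμ₁ : μ₁ ≠ 0 := left_ne_zero_of_mul_eq_one hprod
  obtain rfl : μ₂ = μ₁⁻¹ := eq_inv_of_mul_eq_one_right hprod
  refine ⟨by push_cast; exact charpoly_roots_fin_two_conj 1 _, fun hl => ?_, fun hl => ?_⟩
  all_goals rw [norm_coupling_inv hμ₁]
  · obtain ⟨hre, hnorm⟩ := re_eq_and_norm_eq_one_of_sq_lt_four hroot hl
    rw [hre, hnorm, abs_div, abs_two]
    ring
  · have him := im_eq_zero_of_four_lt_sq hroot hl
    have hrel : 1 + μ₁.re ^ 2 = lam * μ₁.re := by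
      linear_combination (re_im_of_sq_sub_mul_add_one hroot).1 + μ₁.im * him
    rw [Complex.sq_norm, Complex.normSq_apply, him, mul_zero, add_zero, ← sq]
    exact two_mul_abs_div_one_add_sq hrel

/-- for `λ ≠ 0` and `μ₁, μ₂` the roots of `x² − λx + 1 = 0`, with
`γ = (μ₁·conj(μ₂)+1)/√((1+|μ₁|²)(1+|μ₂|²))`, the eigenvalues of `[[1,γ],[conj γ,1]]`
are `1 ± |γ|`; moreover `|γ| = |λ|/2` when `λ² < 4` and `|γ| = 2/|λ|` when `λ² > 4`. -/
theorem stmt17 (lam : ℝ) (hlam : lam ≠ 0) (μ₁ μ₂ : ℂ)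
    (hsum : μ₁ + μ₂ = (lam : ℂ)) (hprod : μ₁ * μ₂ = 1) :
    (!![1, (μ₁ * (starRingEnd ℂ) μ₂ + 1) /
          ((Real.sqrt ((1 + ‖μ₁‖ ^ 2) * (1 + ‖μ₂‖ ^ 2)) : ℝ) : ℂ);
        (starRingEnd ℂ) ((μ₁ * (starRingEnd ℂ) μ₂ + 1) /
          ((Real.sqrt ((1 + ‖μ₁‖ ^ 2) * (1 + ‖μ₂‖ ^ 2)) : ℝ) : ℂ)),
        1] : Matrix (Fin 2) (Fin 2) ℂ).charpoly.roots =
      {((1 + ‖(μ₁ * (starRingEnd ℂ) μ₂ + 1) /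
          ((Real.sqrt ((1 + ‖μ₁‖ ^ 2) * (1 + ‖μ₂‖ ^ 2)) : ℝ) : ℂ)‖ : ℝ) : ℂ),
       ((1 - ‖(μ₁ * (starRingEnd ℂ) μ₂ + 1) /
          ((Real.sqrt ((1 + ‖μ₁‖ ^ 2) * (1 + ‖μ₂‖ ^ 2)) : ℝ) : ℂ)‖ : ℝ) : ℂ)} ∧
    (lam ^ 2 < 4 →
      ‖(μ₁ * (starRingEnd ℂ) μ₂ + 1) /
          ((Real.sqrt ((1 + ‖μ₁‖ ^ 2) * (1 + ‖μ₂‖ ^ 2)) : ℝ) : ℂ)‖ =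
        |lam| / 2) ∧
    (lam ^ 2 > 4 →
      ‖(μ₁ * (starRingEnd ℂ) μ₂ + 1) /
          ((Real.sqrt ((1 + ‖μ₁‖ ^ 2) * (1 + ‖μ₂‖ ^ 2)) : ℝ) : ℂ)‖ =
        2 / |lam|) :=
  stmt17_general lam μ₁ μ₂ hsum hprod
end
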